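/- For the complete {1,2,r}-hypergraph K_t^{{1,2,r}} on t vertices and positive constants α_2, α_r, the maximum over the standard simplex of L(x) = Σ_i x_i + α_2 Σ_{i<j} x_i x_j + α_r Σ_{|e|=r, e⊆[t]} Π_{i∈e} x_i equals 1 + α_2 (t-1)/(2t) + α_r Π_{i=1}^{r-1}(t-i)/(r! t^{r-1}), attained at x_i = 1/t for all i. -/

import Mathlib

/-!
The Lagrangian is `e₁ + α₂ e₂ + αᵣ eᵣ` in the elementary symmetric polynomials. Replacing two
coordinates `xᵢ, xⱼ` of a nonnegative vector by their mean keeps `e₁`, does not decrease any `eₖ`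
(each monomial pairs with its image under the transposition `(i j)`, and the two together are
dominated by twice the averaged monomial), and strictly increases `e₂` when `xᵢ ≠ xⱼ`. A maximiser
on the compact simplex therefore has equal coordinates, so it is the barycentre, where
`eₖ = C(t, k) / t^k`.
-/

open Finset

def stdSimplex' (n : ℕ) : Set (Fin n → ℝ) :=
  {x | (∀ i, 0 ≤ x i) ∧ ∑ i, x i = 1}

section ElementarySymmetric

variable {ι R : Type*} [Fintype ι]

def elemSymm [CommSemiring R] (r : ℕ) (x : ι → R) : R :=
  ∑ e ∈ (univ : Finset ι).powersetCard r, ∏ i ∈ e, x i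

theorem elemSymm_comp_perm [CommSemiring R] (r : ℕ) (x : ι → R) (σ : Equiv.Perm ι) :
    elemSymm r (x ∘ σ) = elemSymm r x := by
  conv_rhs => rw [elemSymm, ← map_univ_equiv σ, powersetCard_map, sum_map]
  simp [elemSymm, prod_map]

theorem elemSymm_const [CommSemiring R] (r : ℕ) (c : R) :
    elemSymm r (fun _ : ι => c) = (Fintype.card ι).choose r * c ^ r := by
  rw [elemSymm, sum_congr rfl fun e he => by rw [prod_const, (mem_powersetCard_univ.1 he)],
    sum_const, card_powersetCard, card_univ, nsmul_eq_mul]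

end ElementarySymmetric

theorem choose_mul_inv_pow (t r : ℕ) (ht : 1 ≤ t) :
    (t.choose r : ℝ) * (t : ℝ)⁻¹ ^ r
      = (∏ i ∈ Icc 1 (r - 1), ((t : ℝ) - i)) / (r.factorial * (t : ℝ) ^ (r - 1)) := by
  have ht0 : (t : ℝ) ≠ 0 := by positivity
  obtain _ | m := r
  · simp
  have hdesc : ((m + 1).factorial : ℝ) * t.choose (m + 1) = t * ∏ i ∈ Icc 1 m, ((t : ℝ) - i) := by
    rw [← Nat.cast_mul, ← Nat.descFactorial_eq_factorial_mul_choose,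
      ← descPochhammer_eval_eq_descFactorial, descPochhammer_eval_eq_prod_range, prod_range_succ',
      range_eq_Ico, prod_Ico_add' (fun i : ℕ => (t : ℝ) - i), zero_add,
      Ico_add_one_right_eq_Icc, Nat.cast_zero, sub_zero, mul_comm]
  rw [Nat.add_sub_cancel, eq_div_iff (by positivity)]
  calc _ = ((m + 1).factorial * t.choose (m + 1) : ℝ) / t * (t * (t : ℝ)⁻¹) ^ m := by ring
    _ = _ := by rw [hdesc, mul_inv_cancel₀ ht0, one_pow, mul_one, mul_div_cancel_left₀ _ ht0]

section Averaging

variable {ι : Type*} [DecidableEq ι]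

noncomputable def pairAverage (x : ι → ℝ) (i j : ι) : ι → ℝ :=
  fun k => if k = i ∨ k = j then (x i + x j) / 2 else x k

variable {x : ι → ℝ} {i j : ι}

theorem pairAverage_nonneg (hx : ∀ k, 0 ≤ x k) (k : ι) : 0 ≤ pairAverage x i j k := by
  unfold pairAverage
  split_ifs
  exacts [by linarith [hx i, hx j], hx k]

theorem sum_pairAverage [Fintype ι] (hij : i ≠ j) : ∑ k, pairAverage x i j k = ∑ k, x k := by
  rw [← sum_compl_add_sum {i, j}, ← sum_compl_add_sum {i, j} x, sum_pair hij, sum_pair hij]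
  congr 1
  · exact sum_congr rfl fun k hk => by simp_all [pairAverage]
  · simp [pairAverage]

theorem pairAverage_mem_stdSimplex [Fintype ι] (hx : x ∈ stdSimplex ℝ ι) (hij : i ≠ j) :
    pairAverage x i j ∈ stdSimplex ℝ ι :=
  ⟨pairAverage_nonneg hx.1, (sum_pairAverage hij).trans hx.2⟩

/- Outside `{i, j}` the three products share the same factor; on `e ∩ {i, j}` the claim is
`1 + 1 ≤ 2`, `x i + x j ≤ 2 * ((x i + x j) / 2)` or `2 x_i x_j ≤ 2 ((x i + x j) / 2)^2`. -/
theorem prod_add_prod_swap_le_two_mul_prod_pairAverage (hx : ∀ k, 0 ≤ x k) (hij : i ≠ j)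
    (e : Finset ι) :
    ∏ k ∈ e, x k + ∏ k ∈ e, x (Equiv.swap i j k) ≤ 2 * ∏ k ∈ e, pairAverage x i j k := by
  set R := ∏ k ∈ e \ {i, j}, x k
  have hR : 0 ≤ R := prod_nonneg fun k _ => hx k
  have split : ∀ f : ι → ℝ, (∀ k ∉ ({i, j} : Finset ι), f k = x k) →
      ∏ k ∈ e, f k = (∏ k ∈ e ∩ {i, j}, f k) * R := fun f hf => by
    rw [← prod_inter_mul_prod_sdiff e {i, j}]
    exact congrArg _ (prod_congr rfl fun k hk => hf k (mem_sdiff.1 hk).2)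
  rw [split x (fun _ _ => rfl), split _ fun k hk => ?swap, split _ fun k hk => ?avg]
  case swap =>
    simp only [mem_insert, mem_singleton, not_or] at hk
    rw [Equiv.swap_apply_of_ne_of_ne hk.1 hk.2]
  case avg =>
    simp only [mem_insert, mem_singleton, not_or] at hk
    simp [pairAverage, hk.1, hk.2]
  rw [← add_mul, mul_left_comm, ← mul_assoc]
  refine mul_le_mul_of_nonneg_right ?_ hR
  by_cases hi : i ∈ e <;> by_cases hj : j ∈ e
  all_goals simp [hi, hj, pairAverage, hij, hij.symm]
  all_goals nlinarith [sq_nonneg (x i - x j)]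

variable [Fintype ι]

theorem two_mul_elemSymm_eq_sum_prod_add_prod_swap (r : ℕ) :
    2 * elemSymm r x = ∑ e ∈ (univ : Finset ι).powersetCard r,
      (∏ k ∈ e, x k + ∏ k ∈ e, x (Equiv.swap i j k)) := by
  rw [sum_add_distrib, two_mul]
  nth_rw 2 [← elemSymm_comp_perm r x (Equiv.swap i j)]
  rfl

theorem elemSymm_le_elemSymm_pairAverage (hx : ∀ k, 0 ≤ x k) (hij : i ≠ j) (r : ℕ) :
    elemSymm r x ≤ elemSymm r (pairAverage x i j) := by
  have h := sum_le_sum fun e (_ : e ∈ (univ : Finset ι).powersetCard r) =>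
    prod_add_prod_swap_le_two_mul_prod_pairAverage hx hij e
  rw [← two_mul_elemSymm_eq_sum_prod_add_prod_swap, ← mul_sum] at h
  exact le_of_mul_le_mul_left h two_pos

theorem elemSymm_two_lt_elemSymm_two_pairAverage (hx : ∀ k, 0 ≤ x k) (hij : i ≠ j)
    (hne : x i ≠ x j) : elemSymm 2 x < elemSymm 2 (pairAverage x i j) := by
  have hpair : ∏ k ∈ {i, j}, x k + ∏ k ∈ {i, j}, x (Equiv.swap i j k)
      < 2 * ∏ k ∈ {i, j}, pairAverage x i j k := by
    simp only [prod_pair hij, Equiv.swap_apply_left, Equiv.swap_apply_right, pairAverage,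
      true_or, or_true, if_true]
    nlinarith [sq_pos_of_ne_zero (sub_ne_zero_of_ne hne)]
  have h := sum_lt_sum (fun e (_ : e ∈ (univ : Finset ι).powersetCard 2) =>
    prod_add_prod_swap_le_two_mul_prod_pairAverage hx hij e)
    ⟨{i, j}, by simp [card_pair hij], hpair⟩
  rw [← two_mul_elemSymm_eq_sum_prod_add_prod_swap, ← mul_sum] at h
  exact lt_of_mul_lt_mul_left h zero_le_two

end Averaging

section Lagrangian

variable {ι : Type*} [Fintype ι] {α₂ αᵣ : ℝ} {r : ℕ}

/- The Lagrangian of the complete `{1, 2, r}`-hypergraph on `ι` with edge weights `1, α₂, αᵣ`. -/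
def lagrangian (α₂ αᵣ : ℝ) (r : ℕ) (x : ι → ℝ) : ℝ :=
  ∑ i, x i + α₂ * elemSymm 2 x + αᵣ * elemSymm r x

theorem continuous_lagrangian : Continuous (lagrangian (ι := ι) α₂ αᵣ r) := by
  unfold lagrangian elemSymm
  fun_prop

theorem lagrangian_lt_lagrangian_pairAverage [DecidableEq ι] (hα₂ : 0 < α₂) (hαᵣ : 0 ≤ αᵣ)
    {x : ι → ℝ} {i j : ι} (hx : ∀ k, 0 ≤ x k) (hij : i ≠ j) (hne : x i ≠ x j) :
    lagrangian α₂ αᵣ r x < lagrangian α₂ αᵣ r (pairAverage x i j) := by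
  have h₂ := mul_lt_mul_of_pos_left (elemSymm_two_lt_elemSymm_two_pairAverage hx hij hne) hα₂
  have hᵣ := mul_le_mul_of_nonneg_left (elemSymm_le_elemSymm_pairAverage hx hij r) hαᵣ
  rw [lagrangian, lagrangian, sum_pairAverage hij]
  linarith

theorem eq_inv_card_of_isMaxOn_lagrangian (hα₂ : 0 < α₂) (hαᵣ : 0 ≤ αᵣ) {x : ι → ℝ}
    (hx : x ∈ stdSimplex ℝ ι) (hmax : IsMaxOn (lagrangian α₂ αᵣ r) (stdSimplex ℝ ι) x) :
    x = fun _ => (Fintype.card ι : ℝ)⁻¹ := by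
  classical
  have hconst : ∀ i j, x i = x j := by
    by_contra! ⟨i, j, hne⟩
    have hij : i ≠ j := fun h => hne (h ▸ rfl)
    exact (lagrangian_lt_lagrangian_pairAverage hα₂ hαᵣ hx.1 hij hne).not_ge
      (hmax (pairAverage_mem_stdSimplex hx hij))
  funext k
  have hsum := hx.2
  rw [sum_congr rfl fun i _ => hconst i k, sum_const, card_univ, nsmul_eq_mul] at hsum
  exact eq_inv_of_mul_eq_one_right hsum

theorem lagrangian_le_lagrangian_inv_card [Nonempty ι] (hα₂ : 0 < α₂) (hαᵣ : 0 ≤ αᵣ)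
    {y : ι → ℝ} (hy : y ∈ stdSimplex ℝ ι) :
    lagrangian α₂ αᵣ r y ≤ lagrangian α₂ αᵣ r (fun _ : ι => (Fintype.card ι : ℝ)⁻¹) := by
  obtain ⟨x, hx, hmax⟩ := (isCompact_stdSimplex ℝ ι).exists_isMaxOn
    ⟨_, (stdSimplex.barycenter (𝕜 := ℝ)).2⟩ continuous_lagrangian.continuousOn
  rw [← eq_inv_card_of_isMaxOn_lagrangian hα₂ hαᵣ hx hmax]
  exact hmax hy

theorem lagrangian_inv_card (α₂ αᵣ : ℝ) (r : ℕ) [Nonempty ι] :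
    lagrangian α₂ αᵣ r (fun _ : ι => (Fintype.card ι : ℝ)⁻¹)
      = 1 + α₂ * (((Fintype.card ι : ℝ) - 1) / (2 * Fintype.card ι))
        + αᵣ * (∏ i ∈ Icc 1 (r - 1), ((Fintype.card ι : ℝ) - i))
          / (r.factorial * (Fintype.card ι : ℝ) ^ (r - 1)) := by
  have hcard := Fintype.card_pos (α := ι)
  rw [lagrangian, elemSymm_const, elemSymm_const, choose_mul_inv_pow _ _ hcard,
    choose_mul_inv_pow _ _ hcard, sum_const, card_univ, nsmul_eq_mul,
    mul_inv_cancel₀ (by positivity)]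
  simp only [Nat.add_one_sub_one, Icc_self, prod_singleton, Nat.cast_one, Nat.factorial_two,
    Nat.cast_ofNat, pow_one]
  ring

end Lagrangian

theorem stmt_6_general (t r : ℕ) (ht : 1 ≤ t) (α2 αr : ℝ) (hα2 : 0 < α2) (hαr : 0 < αr) :
    IsGreatest {y : ℝ | ∃ x ∈ stdSimplex' t,
        y = (∑ i, x i)
          + α2 * ∑ e ∈ (univ : Finset (Fin t)).powersetCard 2, ∏ i ∈ e, x i
          + αr * ∑ e ∈ (univ : Finset (Fin t)).powersetCard r, ∏ i ∈ e, x i}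
      (1 + α2 * (((t : ℝ) - 1) / (2 * t))
        + αr * (∏ i ∈ Finset.Icc 1 (r - 1), ((t : ℝ) - i)) / (Nat.factorial r * (t : ℝ) ^ (r - 1))) ∧
    ((∑ _i : Fin t, ((1 : ℝ) / t))
        + α2 * ∑ e ∈ (univ : Finset (Fin t)).powersetCard 2, ∏ _i ∈ e, ((1 : ℝ) / t)
        + αr * ∑ e ∈ (univ : Finset (Fin t)).powersetCard r, ∏ _i ∈ e, ((1 : ℝ) / t))
      = 1 + α2 * (((t : ℝ) - 1) / (2 * t))
        + αr * (∏ i ∈ Finset.Icc 1 (r - 1), ((t : ℝ) - i)) / (Nat.factorial r * (t : ℝ) ^ (r - 1)) := by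
  have : Nonempty (Fin t) := ⟨⟨0, ht⟩⟩
  have hval := lagrangian_inv_card (ι := Fin t) α2 αr r
  simp only [Fintype.card_fin] at hval
  simp only [one_div]
  refine ⟨⟨⟨_, ⟨fun _ => by positivity, by simp [show t ≠ 0 by omega]⟩, hval.symm⟩, ?_⟩, hval⟩
  rintro _ ⟨x, hx, rfl⟩
  have hle := lagrangian_le_lagrangian_inv_card (r := r) hα2 hαr.le hx
  rw [Fintype.card_fin] at hle
  exact hle.trans_eq hval

/-- The weighted Lagrangian of the complete `{1,2,r}`-hypergraph on `t` vertices. -/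
theorem stmt_6 (t r : ℕ) (ht : 1 ≤ t) (hr : 3 ≤ r) (α2 αr : ℝ) (hα2 : 0 < α2) (hαr : 0 < αr) :
    IsGreatest {y : ℝ | ∃ x ∈ stdSimplex' t,
        y = (∑ i, x i)
          + α2 * ∑ e ∈ (univ : Finset (Fin t)).powersetCard 2, ∏ i ∈ e, x i
          + αr * ∑ e ∈ (univ : Finset (Fin t)).powersetCard r, ∏ i ∈ e, x i}
      (1 + α2 * (((t : ℝ) - 1) / (2 * t))
        + αr * (∏ i ∈ Finset.Icc 1 (r - 1), ((t : ℝ) - i)) / (Nat.factorial r * (t : ℝ) ^ (r - 1))) ∧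
    ((∑ _i : Fin t, ((1 : ℝ) / t))
        + α2 * ∑ e ∈ (univ : Finset (Fin t)).powersetCard 2, ∏ _i ∈ e, ((1 : ℝ) / t)
        + αr * ∑ e ∈ (univ : Finset (Fin t)).powersetCard r, ∏ _i ∈ e, ((1 : ℝ) / t))
      = 1 + α2 * (((t : ℝ) - 1) / (2 * t))
        + αr * (∏ i ∈ Finset.Icc 1 (r - 1), ((t : ℝ) - i)) / (Nat.factorial r * (t : ℝ) ^ (r - 1)) :=
  stmt_6_general t r ht α2 αr hα2 hαr
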